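/- arXiv:2303.13145 — 3 statements merged into one kernel-verified Lean document; each statement's English description precedes it below -/
import Mathlib

section
/- Let H be a k-uniform hypergraph with m edges and no isolated vertices. For any nonempty proper subset X of V(H), the largest normalized Laplacian eigenvalue satisfies λ_1(H) ≥ |∂X|·k·m / ((k-1)·vol(X)·(km - vol(X))). -/
/-!
Test the Rayleigh quotient of the normalized Laplacian `D^{-1/2} L D^{-1/2}` on `x = D^{1/2} y`,
where `y` is `vol Xᶜ` on `X` and `-vol X` off `X`. Then `x ⬝ᵥ x = Σ d_v y_v² = vol X · vol Xᶜ · km`,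
while `x ⬝ᵥ (D^{-1/2} L D^{-1/2}) x = y ⬝ᵥ L y = Σ_{u ∈ X, v ∉ X} a_{uv} (y_u - y_v)²
= |∂X| / (k - 1) · (km)²`, and the largest eigenvalue dominates every Rayleigh quotient.
-/

open Finset

variable {n : ℕ}

def hdeg (E : Finset (Finset (Fin n))) (v : Fin n) : ℕ :=
  (E.filter fun e => v ∈ e).card

def codeg (E : Finset (Finset (Fin n))) (u v : Fin n) : ℕ :=
  (E.filter fun e => u ∈ e ∧ v ∈ e).card

noncomputable def adjMat (E : Finset (Finset (Fin n))) : Matrix (Fin n) (Fin n) ℝ :=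
  fun u v => if u = v then 0
    else ∑ e ∈ E.filter (fun e => u ∈ e ∧ v ∈ e), (1 : ℝ) / ((e.card : ℝ) - 1)

noncomputable def lapMat (E : Finset (Finset (Fin n))) : Matrix (Fin n) (Fin n) ℝ :=
  Matrix.diagonal (fun v => (hdeg E v : ℝ)) - adjMat E

noncomputable def normLap (E : Finset (Finset (Fin n))) : Matrix (Fin n) (Fin n) ℝ :=
  Matrix.diagonal (fun v => (hdeg E v : ℝ) ^ (-(1/2) : ℝ)) * lapMat E *
    Matrix.diagonal (fun v => (hdeg E v : ℝ) ^ (-(1/2) : ℝ))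

noncomputable def eigsAsc (M : Matrix (Fin n) (Fin n) ℝ) : Fin n → ℝ :=
  if h : M.IsHermitian then (h.eigenvalues ∘ Tuple.sort h.eigenvalues) else 0

noncomputable def lamMax {n : ℕ} (M : Matrix (Fin n) (Fin n) ℝ) : ℝ :=
  ⨆ i, eigsAsc M i

noncomputable def volR {n : ℕ} (E : Finset (Finset (Fin n))) (S : Finset (Fin n)) : ℝ :=
  ∑ v ∈ S, (hdeg E v : ℝ)

noncomputable def bndR {n : ℕ} (E : Finset (Finset (Fin n))) (S : Finset (Fin n)) : ℝ :=
  ∑ u ∈ S, ∑ v ∈ Sᶜ, (codeg E u v : ℝ)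

open Matrix

namespace Matrix

variable {ι : Type*} [Fintype ι] [DecidableEq ι]

theorem IsHermitian.dotProduct_mulVec_le_iSup_eigenvalues_mul {M : Matrix ι ι ℝ}
    (hM : M.IsHermitian) (x : ι → ℝ) :
    x ⬝ᵥ M *ᵥ x ≤ (⨆ j, hM.eigenvalues j) * (x ⬝ᵥ x) := by
  set U : Matrix ι ι ℝ := (hM.eigenvectorUnitary : Matrix ι ι ℝ)
  set w := x ᵥ* U
  have hstar : star U *ᵥ x = w := by
    rw [star_eq_conjTranspose, conjTranspose_eq_transpose_of_trivial, mulVec_transpose]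
  have hquad : x ⬝ᵥ M *ᵥ x = ∑ j, hM.eigenvalues j * w j ^ 2 := by
    conv_lhs => rw [hM.spectral_theorem, Unitary.conjStarAlgAut_apply]
    rw [← mulVec_mulVec, ← mulVec_mulVec, dotProduct_mulVec, hstar]
    simp only [dotProduct, mulVec_diagonal]
    exact sum_congr rfl fun j _ => by simp [w]; ring
  have hnorm : x ⬝ᵥ x = ∑ j, w j ^ 2 := by
    have hU : U * star U = 1 := mem_unitaryGroup_iff.mp hM.eigenvectorUnitary.2
    calc x ⬝ᵥ x = x ⬝ᵥ (U * star U) *ᵥ x := by rw [hU, one_mulVec]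
      _ = ∑ j, w j ^ 2 := by
        rw [← mulVec_mulVec, dotProduct_mulVec, hstar]
        simp only [dotProduct, sq, w]
  have hbdd : BddAbove (Set.range hM.eigenvalues) := (Set.finite_range _).bddAbove
  rw [hquad, hnorm, mul_sum]
  exact sum_le_sum fun j _ => mul_le_mul_of_nonneg_right (le_ciSup hbdd j) (sq_nonneg _)

theorem dotProduct_diagonal_mul_mul_diagonal_mulVec {s t : ι → ℝ} (hts : ∀ i, t i * s i = 1)
    (L : Matrix ι ι ℝ) (y : ι → ℝ) :
    (s * y) ⬝ᵥ (diagonal t * L * diagonal t) *ᵥ (s * y) = y ⬝ᵥ L *ᵥ y := by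
  have hty : diagonal t *ᵥ (s * y) = y := by
    ext i; rw [mulVec_diagonal, Pi.mul_apply, ← mul_assoc, hts, one_mul]
  rw [← mulVec_mulVec, ← mulVec_mulVec, hty]
  simp only [dotProduct, mulVec_diagonal, Pi.mul_apply]
  exact sum_congr rfl fun i _ => by linear_combination (y i * (L *ᵥ y) i) * hts i

theorem dotProduct_laplacian_mulVec {A : Matrix ι ι ℝ} (hA : A.IsSymm) (x : ι → ℝ) :
    x ⬝ᵥ (diagonal (fun u => ∑ v, A u v) - A) *ᵥ x = (∑ u, ∑ v, A u v * (x u - x v) ^ 2) / 2 := by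
  have hswap : ∑ u, ∑ v, A u v * x v ^ 2 = ∑ u, ∑ v, A u v * x u ^ 2 := by
    rw [sum_comm]; simp only [hA.apply]
  have hexp : ∑ u, ∑ v, A u v * (x u - x v) ^ 2
      = ∑ u, ∑ v, A u v * x u ^ 2 - 2 * ∑ u, ∑ v, x u * A u v * x v
        + ∑ u, ∑ v, A u v * x v ^ 2 := by
    simp only [mul_sum, ← sum_sub_distrib, ← sum_add_distrib]
    exact sum_congr rfl fun u _ => sum_congr rfl fun v _ => by ring
  have hdiag : x ⬝ᵥ diagonal (fun u => ∑ v, A u v) *ᵥ x = ∑ u, ∑ v, A u v * x u ^ 2 := by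
    simp only [dotProduct, mulVec_diagonal, sum_mul, mul_sum]
    exact sum_congr rfl fun u _ => sum_congr rfl fun v _ => by ring
  have hoff : x ⬝ᵥ A *ᵥ x = ∑ u, ∑ v, x u * A u v * x v := by
    simp only [dotProduct, mulVec, mul_sum, mul_assoc]
  rw [hexp, hswap, sub_mulVec, dotProduct_sub, hdiag, hoff]
  ring

theorem dotProduct_laplacian_mulVec_ite {A : Matrix ι ι ℝ} (hA : A.IsSymm) (X : Finset ι)
    (α β : ℝ) :
    (fun v => if v ∈ X then α else β) ⬝ᵥ
        (diagonal (fun u => ∑ v, A u v) - A) *ᵥ (fun v => if v ∈ X then α else β) =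
      (∑ u ∈ X, ∑ v ∈ Xᶜ, A u v) * (α - β) ^ 2 := by
  rw [dotProduct_laplacian_mulVec hA]
  have hsplit : ∀ u v, A u v * ((if u ∈ X then α else β) - if v ∈ X then α else β) ^ 2 =
      (α - β) ^ 2 * ((if u ∈ X then if v ∈ Xᶜ then A u v else 0 else 0) +
        if v ∈ X then if u ∈ Xᶜ then A v u else 0 else 0) := by
    intro u v
    by_cases hu : u ∈ X <;> by_cases hv : v ∈ X <;> simp [hu, hv, hA.apply u v] <;> ring
  simp only [hsplit, ← mul_sum, sum_add_distrib]
  rw [sum_comm (f := fun u v => if v ∈ X then _ else _)]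
  simp only [sum_ite_mem, univ_inter, sum_ite_irrel, sum_const_zero]
  ring

end Matrix

theorem lamMax_eq_iSup_eigenvalues {M : Matrix (Fin n) (Fin n) ℝ} (hM : M.IsHermitian) :
    lamMax M = ⨆ j, hM.eigenvalues j := by
  rw [lamMax, eigsAsc, dif_pos hM, iSup, iSup,
    (Tuple.sort hM.eigenvalues).surjective.range_comp]

theorem dotProduct_mulVec_le_lamMax_mul {M : Matrix (Fin n) (Fin n) ℝ} (hM : M.IsHermitian)
    (x : Fin n → ℝ) : x ⬝ᵥ M *ᵥ x ≤ lamMax M * (x ⬝ᵥ x) :=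
  lamMax_eq_iSup_eigenvalues hM ▸ hM.dotProduct_mulVec_le_iSup_eigenvalues_mul x

theorem adjMat_isSymm (E : Finset (Finset (Fin n))) : (adjMat E).IsSymm := by
  ext u v
  simp only [transpose_apply, adjMat, eq_comm (a := v), and_comm (a := v ∈ _)]

theorem isHermitian_normLap (E : Finset (Finset (Fin n))) : (normLap E).IsHermitian := by
  have hL : (lapMat E).IsHermitian :=
    (isHermitian_diagonal _).sub (isHermitian_iff_isSymm.mpr (adjMat_isSymm E))
  have := isHermitian_mul_mul_conjTranspose (diagonal fun v => (hdeg E v : ℝ) ^ (-(1/2) : ℝ)) hL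
  rwa [(isHermitian_diagonal _).eq] at this

theorem sum_hdeg (E : Finset (Finset (Fin n))) : ∑ v, hdeg E v = ∑ e ∈ E, e.card := by
  simpa [hdeg, bipartiteAbove, bipartiteBelow] using
    sum_card_bipartiteAbove_eq_sum_card_bipartiteBelow (s := univ) (t := E) (fun v e => v ∈ e)

theorem adjMat_of_ne {k : ℕ} {E : Finset (Finset (Fin n))} (hunif : ∀ e ∈ E, e.card = k)
    {u v : Fin n} (huv : u ≠ v) : adjMat E u v = codeg E u v / ((k : ℝ) - 1) := by
  rw [adjMat, if_neg huv, sum_congr rfl fun e he => by rw [hunif e (mem_filter.mp he).1],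
    sum_const, nsmul_eq_mul, mul_one_div, codeg]

theorem sum_adjMat_eq_hdeg {E : Finset (Finset (Fin n))} (hE : ∀ e ∈ E, e.card ≠ 1) (u : Fin n) :
    ∑ v, adjMat E u v = hdeg E u := by
  have hentry : ∀ v, adjMat E u v =
      ∑ e ∈ E.filter (u ∈ ·), if v ∈ e.erase u then ((e.card : ℝ) - 1)⁻¹ else 0 := by
    intro v
    rw [← sum_filter, filter_filter]
    by_cases h : u = v
    · subst h; simp [adjMat]
    · rw [adjMat, if_neg h]
      refine sum_congr ?_ fun _ _ => one_div _
      ext e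
      simp [mem_erase, Ne.symm h, and_comm]
  have hedge : ∀ e ∈ E.filter (u ∈ ·),
      ∑ v, (if v ∈ e.erase u then ((e.card : ℝ) - 1)⁻¹ else 0) = 1 := by
    intro e he
    obtain ⟨heE, hu⟩ := mem_filter.mp he
    have hcard : (e.card : ℝ) - 1 ≠ 0 := sub_ne_zero.mpr (by exact_mod_cast hE e heE)
    rw [sum_ite_mem, univ_inter, sum_const, card_erase_of_mem hu, nsmul_eq_mul,
      Nat.cast_pred (card_pos.mpr ⟨u, hu⟩), mul_inv_cancel₀ hcard]
  rw [sum_congr rfl fun v _ => hentry v, sum_comm, sum_congr rfl hedge, hdeg, card_eq_sum_ones,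
    Nat.cast_sum, Nat.cast_one]

theorem lapMat_eq_diagonal_sub_adjMat {E : Finset (Finset (Fin n))} (hE : ∀ e ∈ E, e.card ≠ 1) :
    lapMat E = diagonal (fun u => ∑ v, adjMat E u v) - adjMat E := by
  simp only [lapMat, sum_adjMat_eq_hdeg hE]

theorem sum_sum_compl_adjMat {k : ℕ} {E : Finset (Finset (Fin n))}
    (hunif : ∀ e ∈ E, e.card = k) (X : Finset (Fin n)) :
    ∑ u ∈ X, ∑ v ∈ Xᶜ, adjMat E u v = bndR E X / ((k : ℝ) - 1) := by
  rw [bndR, sum_div]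
  refine sum_congr rfl fun u hu => ?_
  rw [sum_div]
  refine sum_congr rfl fun v hv => adjMat_of_ne hunif ?_
  rintro rfl
  exact mem_compl.mp hv hu

theorem volR_pos {E : Finset (Finset (Fin n))} (hiso : ∀ v, 0 < hdeg E v) {S : Finset (Fin n)}
    (hS : S.Nonempty) : 0 < volR E S :=
  sum_pos (fun v _ => by exact_mod_cast hiso v) hS

theorem volR_add_volR_compl {k m : ℕ} {E : Finset (Finset (Fin n))}
    (hunif : ∀ e ∈ E, e.card = k) (hm : E.card = m) (X : Finset (Fin n)) :
    volR E X + volR E Xᶜ = k * m := by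
  rw [volR, volR, sum_add_sum_compl, ← Nat.cast_sum, sum_hdeg, sum_congr rfl hunif, sum_const,
    hm, smul_eq_mul, Nat.cast_mul, mul_comm]

theorem bndR_div_mul_sq_le_lamMax_mul {k : ℕ} (hk : k ≠ 1) {E : Finset (Finset (Fin n))}
    (hunif : ∀ e ∈ E, e.card = k) (hiso : ∀ v, 0 < hdeg E v) (X : Finset (Fin n)) :
    bndR E X / ((k : ℝ) - 1) * (volR E X + volR E Xᶜ) ^ 2 ≤
      lamMax (normLap E) * (volR E X * volR E Xᶜ * (volR E X + volR E Xᶜ)) := by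
  set y : Fin n → ℝ := fun v => if v ∈ X then volR E Xᶜ else -volR E X
  set s : Fin n → ℝ := fun v => √(hdeg E v)
  have hts : ∀ v, (hdeg E v : ℝ) ^ (-(1/2) : ℝ) * s v = 1 := by
    intro v
    have : (0 : ℝ) < hdeg E v := by exact_mod_cast hiso v
    rw [Real.rpow_neg this.le, ← Real.sqrt_eq_rpow, inv_mul_cancel₀ (Real.sqrt_pos.mpr this).ne']
  have hE : ∀ e ∈ E, e.card ≠ 1 := fun e he => hunif e he ▸ hk
  have hquad : (s * y) ⬝ᵥ normLap E *ᵥ (s * y) =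
      bndR E X / ((k : ℝ) - 1) * (volR E X + volR E Xᶜ) ^ 2 := by
    rw [normLap, dotProduct_diagonal_mul_mul_diagonal_mulVec hts, lapMat_eq_diagonal_sub_adjMat hE,
      dotProduct_laplacian_mulVec_ite (adjMat_isSymm E), sum_sum_compl_adjMat hunif]
    ring
  have hnorm : (s * y) ⬝ᵥ (s * y) = volR E X * volR E Xᶜ * (volR E X + volR E Xᶜ) := by
    calc (s * y) ⬝ᵥ (s * y) = ∑ v, (hdeg E v : ℝ) * y v ^ 2 := by
          refine sum_congr rfl fun v _ => ?_
          rw [Pi.mul_apply, mul_mul_mul_comm, Real.mul_self_sqrt (Nat.cast_nonneg _), sq]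
      _ = (∑ v ∈ X, (hdeg E v : ℝ)) * volR E Xᶜ ^ 2 +
            (∑ v ∈ Xᶜ, (hdeg E v : ℝ)) * volR E X ^ 2 := by
          rw [← sum_add_sum_compl X, sum_mul, sum_mul]
          congr 1 <;> refine sum_congr rfl fun v hv => ?_
          · simp [y, hv]
          · simp [y, mem_compl.mp hv]
      _ = volR E X * volR E Xᶜ * (volR E X + volR E Xᶜ) := by
          change volR E X * _ + volR E Xᶜ * _ = _
          ring
  simpa only [hquad, hnorm] using dotProduct_mulVec_le_lamMax_mul (isHermitian_normLap E) (s * y)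

theorem stmt7 (n k m : ℕ) (hk : 2 ≤ k) (E : Finset (Finset (Fin n)))
    (hunif : ∀ e ∈ E, e.card = k) (hm : E.card = m) (hiso : ∀ v : Fin n, 0 < hdeg E v)
    (X : Finset (Fin n)) (hX : X.Nonempty) (hXp : X ≠ Finset.univ) :
    bndR E X * (k : ℝ) * (m : ℝ) /
        (((k : ℝ) - 1) * volR E X * ((k : ℝ) * (m : ℝ) - volR E X)) ≤
      lamMax (normLap E) := by
  have ha := volR_pos hiso hX
  have hb := volR_pos hiso (S := Xᶜ) (by rwa [← compl_ne_univ_iff_nonempty, compl_compl])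
  have hk1 : (0 : ℝ) < k - 1 := by
    have : (2 : ℝ) ≤ k := by exact_mod_cast hk
    linarith
  have key := bndR_div_mul_sq_le_lamMax_mul (by omega) hunif hiso X
  rw [div_mul_eq_mul_div, div_le_iff₀ hk1] at key
  rw [mul_assoc, ← volR_add_volR_compl hunif hm X, add_sub_cancel_left,
    div_le_iff₀ (by positivity)]
  refine le_of_mul_le_mul_right ?_ (add_pos ha hb)
  linarith
end

section
/- For a k-uniform hypergraph H without isolated vertices, the largest normalized Laplacian eigenvalue satisfies λ_1(H) ≤ k/(k-1). -/
/-!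
Let `B` be the vertex–edge incidence matrix. Then `B Bᵀ` is the co-degree matrix, whose diagonal
is the degree matrix `D`, so in a `k`-uniform hypergraph `(k - 1) A = B Bᵀ - D` and
`k/(k-1) • D - L = (k - 1)⁻¹ • B Bᵀ` is positive semidefinite. Conjugating by `D^{-1/2}` shows that
`k/(k-1) • 1 - 𝓛` is positive semidefinite, so every eigenvalue of `𝓛` is at most `k/(k-1)`.
-/

open Finset

variable {n : ℕ}

open Matrix

noncomputable def incMat (E : Finset (Finset (Fin n))) : Matrix (Fin n) E ℝ :=
  fun v e => if v ∈ (e : Finset (Fin n)) then 1 else 0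

lemma incMat_mul_transpose_apply (E : Finset (Finset (Fin n))) (u v : Fin n) :
    (incMat E * (incMat E)ᵀ) u v = codeg E u v := by
  simp only [mul_apply, transpose_apply, incMat, ite_zero_mul_ite_zero, one_mul]
  rw [Finset.sum_coe_sort E (fun e => if u ∈ e ∧ v ∈ e then (1 : ℝ) else 0), Finset.sum_boole]
  rfl

lemma codeg_self (E : Finset (Finset (Fin n))) (v : Fin n) : codeg E v v = hdeg E v := by
  simp only [codeg, hdeg, and_self]

lemma adjMat_of_uniform {k : ℕ} {E : Finset (Finset (Fin n))} (hunif : ∀ e ∈ E, e.card = k)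
    (u v : Fin n) :
    adjMat E u v = if u = v then 0 else codeg E u v / ((k : ℝ) - 1) := by
  unfold adjMat
  split_ifs
  · rfl
  · rw [Finset.sum_congr rfl fun e he => by rw [hunif e (Finset.mem_filter.mp he).1],
      Finset.sum_const, nsmul_eq_mul, mul_one_div]
    rfl

lemma smul_degree_sub_lapMat {k : ℕ} {E : Finset (Finset (Fin n))} (hk : 1 < k)
    (hunif : ∀ e ∈ E, e.card = k) :
    ((k : ℝ) / ((k : ℝ) - 1)) • diagonal (fun v => (hdeg E v : ℝ)) - lapMat E
      = ((k : ℝ) - 1)⁻¹ • (incMat E * (incMat E)ᵀ) := by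
  have hκ : (k : ℝ) - 1 ≠ 0 := sub_ne_zero.mpr (by exact_mod_cast hk.ne')
  ext u v
  simp only [lapMat, Matrix.sub_apply, Matrix.smul_apply, smul_eq_mul, incMat_mul_transpose_apply,
    adjMat_of_uniform hunif, diagonal_apply]
  split_ifs with h
  · subst h
    rw [codeg_self]
    field_simp
    ring
  · field_simp
    ring

lemma posSemidef_smul_degree_sub_lapMat {k : ℕ} {E : Finset (Finset (Fin n))} (hk : 1 < k)
    (hunif : ∀ e ∈ E, e.card = k) :
    (((k : ℝ) / ((k : ℝ) - 1)) • diagonal (fun v => (hdeg E v : ℝ)) - lapMat E).PosSemidef := by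
  rw [smul_degree_sub_lapMat hk hunif]
  have hκ : (0 : ℝ) ≤ ((k : ℝ) - 1)⁻¹ := inv_nonneg.mpr (sub_nonneg.mpr (by exact_mod_cast hk.le))
  simpa only [conjTranspose_eq_transpose_of_trivial] using
    (posSemidef_self_mul_conjTranspose (incMat E)).smul hκ

lemma smul_one_sub_normLap {E : Finset (Finset (Fin n))} (hiso : ∀ v, 0 < hdeg E v) (c : ℝ) :
    c • (1 : Matrix (Fin n) (Fin n) ℝ) - normLap E
      = diagonal (fun v => (hdeg E v : ℝ) ^ (-(1/2) : ℝ))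
          * (c • diagonal (fun v => (hdeg E v : ℝ)) - lapMat E)
          * diagonal (fun v => (hdeg E v : ℝ) ^ (-(1/2) : ℝ)) := by
  have hdiag : diagonal (fun v => (hdeg E v : ℝ) ^ (-(1/2) : ℝ))
      * diagonal (fun v => (hdeg E v : ℝ)) * diagonal (fun v => (hdeg E v : ℝ) ^ (-(1/2) : ℝ))
      = 1 := by
    rw [diagonal_mul_diagonal, diagonal_mul_diagonal, ← diagonal_one]
    congr 1
    funext v
    have hv : (0 : ℝ) < hdeg E v := by exact_mod_cast hiso v
    rw [mul_right_comm, ← Real.rpow_add hv]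
    norm_num [Real.rpow_neg_one, hv.ne']
  rw [normLap, mul_sub, sub_mul, Matrix.mul_smul, Matrix.smul_mul, hdiag]

lemma posSemidef_smul_one_sub_normLap {E : Finset (Finset (Fin n))} (hiso : ∀ v, 0 < hdeg E v)
    {c : ℝ} (hc : (c • diagonal (fun v => (hdeg E v : ℝ)) - lapMat E).PosSemidef) :
    (c • (1 : Matrix (Fin n) (Fin n) ℝ) - normLap E).PosSemidef := by
  rw [smul_one_sub_normLap hiso]
  simpa only [diagonal_conjTranspose, star_trivial] using
    hc.conjTranspose_mul_mul_same (diagonal (fun v => (hdeg E v : ℝ) ^ (-(1/2) : ℝ)))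

lemma eigenvalues_le_of_posSemidef_smul_one_sub {ι : Type*} [Fintype ι] [DecidableEq ι]
    {M : Matrix ι ι ℝ} (hM : M.IsHermitian) {c : ℝ} (h : (c • 1 - M).PosSemidef) (i : ι) :
    hM.eigenvalues i ≤ c := by
  set v : ι → ℝ := ⇑(hM.eigenvectorBasis i)
  have hv : star v ⬝ᵥ v = 1 := by
    have := real_inner_self_eq_norm_sq (hM.eigenvectorBasis i)
    rw [hM.eigenvectorBasis.orthonormal.1 i, EuclideanSpace.inner_eq_star_dotProduct] at this
    simpa [dotProduct_comm] using this
  have := h.dotProduct_mulVec_nonneg v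
  rw [sub_mulVec, dotProduct_sub, smul_mulVec, one_mulVec, dotProduct_smul, hv] at this
  rw [hM.eigenvalues_eq i]
  simpa using this

-- The hypothesis `0 ≤ c` covers `n = 0`, where `lamMax` is the empty supremum `0`.
lemma lamMax_le_of_posSemidef_smul_one_sub {M : Matrix (Fin n) (Fin n) ℝ} {c : ℝ} (hc : 0 ≤ c)
    (h : (c • 1 - M).PosSemidef) : lamMax M ≤ c := by
  have hM : M.IsHermitian := by
    simpa using (isHermitian_one.smul (IsSelfAdjoint.all c)).sub h.isHermitian
  refine Real.iSup_le (fun i => ?_) hc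
  rw [eigsAsc, dif_pos hM]
  exact eigenvalues_le_of_posSemidef_smul_one_sub hM h _

theorem stmt11 (n k : ℕ) (hk : 2 ≤ k) (E : Finset (Finset (Fin n)))
    (hunif : ∀ e ∈ E, e.card = k) (hiso : ∀ v : Fin n, 0 < hdeg E v) :
    lamMax (normLap E) ≤ (k : ℝ) / ((k : ℝ) - 1) := by
  have hk' : (2 : ℝ) ≤ k := by exact_mod_cast hk
  exact lamMax_le_of_posSemidef_smul_one_sub (div_nonneg (by linarith) (by linarith))
    (posSemidef_smul_one_sub_normLap hiso (posSemidef_smul_degree_sub_lapMat hk hunif))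
end

section
/- Let H be an n-vertex k-uniform hypergraph and e ∈ E(H) an edge. Then for each i, λ_{i+k-1}(H) ≤ λ_i(H - e) ≤ λ_{i-k+1}(H), with the conventions λ_j(H) = k/(k-1) for j < 1 and λ_j(H) = 0 for j > n. -/
/-!
Write `x = D^{-1/2} y`. The quadratic form of the normalized Laplacian is then a sum over the
edges `f` of the energies `∑_{v∈f} x_v² - ((∑_{v∈f} x_v)² - ∑_{v∈f} x_v²) / (k - 1)`, while
`|y|² ≥ ∑_v deg v · x_v²`; deleting `e` removes one energy term and lowers the degrees on `e`.

On the subspace where `x` is constant on `e` (codimension `k - 1`) the energy of `e` vanishes, so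
the top `i + k - 1` eigenvectors of `H`, cut down to it and rescaled by `D_{H-e}^{1/2} D_H^{-1/2}`,
span an `i`-dimensional space on which the Rayleigh quotient of `H - e` is at least
`λ_{i+k-1}(H)`; Courant–Fischer gives `λ_{i+k-1}(H) ≤ λ_i(H - e)`. On the hyperplane where `x`
sums to zero on `e` the energy of `e` is `k/(k-1) ∑_{v∈e} x_v²`, which pays for the extra degree
`∑_{v∈e} x_v²` because no eigenvalue exceeds `k/(k-1)`; the same argument in the other direction
gives `λ_i(H - e) ≤ λ_{i-1}(H)`. Outside `1 ≤ j ≤ n` the conventions are handled by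
`0 ≤ λ_j ≤ k/(k-1)`.
-/

open Finset

variable {n : ℕ}

noncomputable def lamConv {n : ℕ} (k : ℕ) (M : Matrix (Fin n) (Fin n) ℝ) (j : ℤ) : ℝ :=
  if h1 : j < 1 then (k : ℝ) / ((k : ℝ) - 1)
  else if h2 : j ≤ (n : ℤ) then eigsAsc M ⟨n - j.toNat, by omega⟩ else 0

open Matrix

theorem Submodule.finrank_le_finrank_inf_ker_add {K V F : Type*} [Field K] [AddCommGroup V]
    [Module K V] [FiniteDimensional K V] [AddCommGroup F] [Module K F] [FiniteDimensional K F]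
    (U : Submodule K V) (φ : V →ₗ[K] F) :
    Module.finrank K U ≤ Module.finrank K ↥(U ⊓ LinearMap.ker φ) + Module.finrank K F := by
  have := Submodule.finrank_sup_add_finrank_inf_eq U (LinearMap.ker φ)
  have := LinearMap.finrank_range_add_finrank_ker φ
  have := Submodule.finrank_le (U ⊔ LinearMap.ker φ)
  have := Submodule.finrank_le (LinearMap.range φ)
  omega

theorem Submodule.finrank_map_of_injOn {K V W : Type*} [Field K] [AddCommGroup V]
    [Module K V] [FiniteDimensional K V] [AddCommGroup W] [Module K W]
    (T : V →ₗ[K] W) (U : Submodule K V) (hT : ∀ y ∈ U, T y = 0 → y = 0) :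
    Module.finrank K (U.map T) = Module.finrank K U := by
  have hinj : Function.Injective (T.domRestrict U) := by
    rw [← LinearMap.ker_eq_bot, LinearMap.ker_eq_bot']
    exact fun y hy => Subtype.ext (hT y y.2 hy)
  rw [← LinearMap.range_domRestrict, (LinearEquiv.ofInjective _ hinj).finrank_eq]

namespace Matrix.IsHermitian

variable {M : Matrix (Fin n) (Fin n) ℝ}

noncomputable def sortedEigenvector (hM : M.IsHermitian) (p : Fin n) : Fin n → ℝ :=
  ⇑(hM.eigenvectorBasis (Tuple.sort hM.eigenvalues p))

theorem eigsAsc_eq (hM : M.IsHermitian) (p : Fin n) :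
    eigsAsc M p = hM.eigenvalues (Tuple.sort hM.eigenvalues p) := by
  rw [eigsAsc, dif_pos hM, Function.comp_apply]

theorem dotProduct_eq_sum_sortedEigenvector (hM : M.IsHermitian) (y z : Fin n → ℝ) :
    y ⬝ᵥ z = ∑ p, (hM.sortedEigenvector p ⬝ᵥ y) * (hM.sortedEigenvector p ⬝ᵥ z) := by
  have := hM.eigenvectorBasis.sum_inner_mul_inner (WithLp.toLp 2 y) (WithLp.toLp 2 z)
  rw [← Equiv.sum_comp (Tuple.sort hM.eigenvalues)] at this
  simp only [EuclideanSpace.inner_eq_star_dotProduct, star_trivial] at this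
  rw [dotProduct_comm y z, ← this]
  simp only [sortedEigenvector, dotProduct_comm z]

theorem mulVec_sortedEigenvector (hM : M.IsHermitian) (p : Fin n) :
    M *ᵥ hM.sortedEigenvector p = eigsAsc M p • hM.sortedEigenvector p := by
  rw [hM.eigsAsc_eq, sortedEigenvector, hM.mulVec_eigenvectorBasis]

theorem sortedEigenvector_dotProduct_mulVec (hM : M.IsHermitian) (p : Fin n) (y : Fin n → ℝ) :
    hM.sortedEigenvector p ⬝ᵥ M *ᵥ y = eigsAsc M p * (hM.sortedEigenvector p ⬝ᵥ y) := by
  rw [dotProduct_mulVec, ← mulVec_transpose, ← conjTranspose_eq_transpose_of_trivial, hM.eq,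
    dotProduct_comm, mulVec_sortedEigenvector, dotProduct_smul, smul_eq_mul, dotProduct_comm]

theorem dotProduct_mulVec_eq_sum (hM : M.IsHermitian) (y : Fin n → ℝ) :
    y ⬝ᵥ M *ᵥ y = ∑ p, eigsAsc M p * (hM.sortedEigenvector p ⬝ᵥ y) ^ 2 := by
  simp only [hM.dotProduct_eq_sum_sortedEigenvector y, sortedEigenvector_dotProduct_mulVec]
  exact Finset.sum_congr rfl fun p _ => by ring

theorem dotProduct_self_eq_sum (hM : M.IsHermitian) (y : Fin n → ℝ) :
    y ⬝ᵥ y = ∑ p, (hM.sortedEigenvector p ⬝ᵥ y) ^ 2 := by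
  simp only [hM.dotProduct_eq_sum_sortedEigenvector y, sq]

theorem le_dotProduct_mulVec (hM : M.IsHermitian) {c : ℝ} {y : Fin n → ℝ}
    (h : ∀ p, eigsAsc M p < c → hM.sortedEigenvector p ⬝ᵥ y = 0) :
    c * (y ⬝ᵥ y) ≤ y ⬝ᵥ M *ᵥ y := by
  rw [hM.dotProduct_mulVec_eq_sum, hM.dotProduct_self_eq_sum, Finset.mul_sum]
  refine Finset.sum_le_sum fun p _ => ?_
  rcases lt_or_ge (eigsAsc M p) c with hp | hp
  · simp [h p hp]
  · exact mul_le_mul_of_nonneg_right hp (sq_nonneg _)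

theorem dotProduct_mulVec_le (hM : M.IsHermitian) {c : ℝ} {y : Fin n → ℝ}
    (h : ∀ p, c < eigsAsc M p → hM.sortedEigenvector p ⬝ᵥ y = 0) :
    y ⬝ᵥ M *ᵥ y ≤ c * (y ⬝ᵥ y) := by
  rw [hM.dotProduct_mulVec_eq_sum, hM.dotProduct_self_eq_sum, Finset.mul_sum]
  refine Finset.sum_le_sum fun p _ => ?_
  rcases lt_or_ge c (eigsAsc M p) with hp | hp
  · simp [h p hp]
  · exact mul_le_mul_of_nonneg_right hp (sq_nonneg _)

theorem sortedEigenvector_dotProduct_self (hM : M.IsHermitian) (p : Fin n) :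
    hM.sortedEigenvector p ⬝ᵥ hM.sortedEigenvector p = 1 := by
  have h := real_inner_self_eq_norm_sq (hM.eigenvectorBasis (Tuple.sort hM.eigenvalues p))
  rwa [hM.eigenvectorBasis.orthonormal.1, one_pow, EuclideanSpace.inner_eq_star_dotProduct,
    star_trivial] at h

theorem eigsAsc_le (hM : M.IsHermitian) {c : ℝ} (hc : ∀ y, y ⬝ᵥ M *ᵥ y ≤ c * (y ⬝ᵥ y))
    (p : Fin n) : eigsAsc M p ≤ c := by
  simpa [hM.sortedEigenvector_dotProduct_mulVec, hM.sortedEigenvector_dotProduct_self]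
    using hc (hM.sortedEigenvector p)

theorem monotone_eigsAsc (hM : M.IsHermitian) : Monotone (eigsAsc M) := by
  rw [eigsAsc, dif_pos hM]
  exact Tuple.monotone_sort _

noncomputable def eigenCoeffs (hM : M.IsHermitian) (S : Finset (Fin n)) :
    (Fin n → ℝ) →ₗ[ℝ] S → ℝ :=
  (Matrix.of fun (q : S) => hM.sortedEigenvector q).mulVecLin

theorem mem_ker_eigenCoeffs (hM : M.IsHermitian) {S : Finset (Fin n)} {y : Fin n → ℝ} :
    y ∈ LinearMap.ker (hM.eigenCoeffs S) ↔ ∀ q ∈ S, hM.sortedEigenvector q ⬝ᵥ y = 0 := by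
  simp [eigenCoeffs, funext_iff, mulVec, Matrix.of_apply]

theorem exists_le_finrank_forall_eigsAsc_mul_le (hM : M.IsHermitian) (p : Fin n) :
    ∃ U : Submodule ℝ (Fin n → ℝ), n - p ≤ Module.finrank ℝ U ∧
      ∀ y ∈ U, eigsAsc M p * (y ⬝ᵥ y) ≤ y ⬝ᵥ M *ᵥ y := by
  refine ⟨LinearMap.ker (hM.eigenCoeffs (Iio p)), ?_, fun y hy => hM.le_dotProduct_mulVec ?_⟩
  · have hdim := Submodule.finrank_le_finrank_inf_ker_add ⊤ (hM.eigenCoeffs (Iio p))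
    rw [top_inf_eq, finrank_top, Module.finrank_fin_fun, Module.finrank_fintype_fun_eq_card,
      Fintype.card_coe, Fin.card_Iio] at hdim
    omega
  · exact fun q hq => hM.mem_ker_eigenCoeffs.mp hy q
      (mem_Iio.mpr (hM.monotone_eigsAsc.reflect_lt hq))

theorem le_eigsAsc_of_le_finrank (hM : M.IsHermitian) (p : Fin n) (V : Submodule ℝ (Fin n → ℝ))
    (hV : n - p ≤ Module.finrank ℝ V) {c : ℝ} (hc : ∀ y ∈ V, c * (y ⬝ᵥ y) ≤ y ⬝ᵥ M *ᵥ y) :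
    c ≤ eigsAsc M p := by
  have hdim := Submodule.finrank_le_finrank_inf_ker_add V (hM.eigenCoeffs (Ioi p))
  rw [Module.finrank_fintype_fun_eq_card, Fintype.card_coe, Fin.card_Ioi] at hdim
  obtain ⟨y, hy, hy0⟩ := Submodule.exists_mem_ne_zero_of_ne_bot
    (Submodule.one_le_finrank_iff.mp (by omega) : V ⊓ LinearMap.ker (hM.eigenCoeffs (Ioi p)) ≠ ⊥)
  have hub : y ⬝ᵥ M *ᵥ y ≤ eigsAsc M p * (y ⬝ᵥ y) :=
    hM.dotProduct_mulVec_le fun q hq => (hM.mem_ker_eigenCoeffs.mp hy.2) q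
      (mem_Ioi.mpr (hM.monotone_eigsAsc.reflect_lt hq))
  have hpos : 0 < y ⬝ᵥ y := by simpa using dotProduct_star_self_pos_iff.mpr hy0
  exact le_of_mul_le_mul_right ((hc y hy.1).trans hub) hpos

end Matrix.IsHermitian

namespace Matrix

variable {M M' : Matrix (Fin n) (Fin n) ℝ}

theorem PosSemidef.eigsAsc_nonneg (hM : M.PosSemidef) (p : Fin n) : 0 ≤ eigsAsc M p := by
  rw [hM.isHermitian.eigsAsc_eq]
  exact hM.eigenvalues_nonneg _

-- Courant–Fischer twice: the span of the top `n - p` eigenvectors of `M`, cut down by `ker φ`,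
-- is carried by `T` (injective there, by `hmono`) to a subspace of dimension `≥ n - q` on which
-- the Rayleigh quotient of `M'` is still at least `eigsAsc M p`.
theorem eigsAsc_le_eigsAsc_of_transfer (hM : M.IsHermitian) (hM' : M'.PosSemidef)
    {F : Type*} [AddCommGroup F] [Module ℝ F] [FiniteDimensional ℝ F]
    (φ : (Fin n → ℝ) →ₗ[ℝ] F) (T : (Fin n → ℝ) →ₗ[ℝ] Fin n → ℝ)
    (hmono : ∀ y ∈ LinearMap.ker φ, y ⬝ᵥ M *ᵥ y ≤ T y ⬝ᵥ M' *ᵥ T y)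
    (htransfer : ∀ c : ℝ, 0 < c → ∀ y ∈ LinearMap.ker φ,
      c * (y ⬝ᵥ y) ≤ y ⬝ᵥ M *ᵥ y → c * (T y ⬝ᵥ T y) ≤ T y ⬝ᵥ M' *ᵥ T y)
    {p q : Fin n} (hpq : p + Module.finrank ℝ F ≤ q) : eigsAsc M p ≤ eigsAsc M' q := by
  rcases le_or_gt (eigsAsc M p) 0 with hc | hc
  · exact hc.trans (hM'.eigsAsc_nonneg q)
  obtain ⟨U, hU, hUc⟩ := hM.exists_le_finrank_forall_eigsAsc_mul_le p
  have hW := Submodule.finrank_le_finrank_inf_ker_add U φ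
  have hinj : ∀ y ∈ U ⊓ LinearMap.ker φ, T y = 0 → y = 0 := by
    intro y hy hTy
    by_contra hy0
    have hpos : 0 < y ⬝ᵥ y := by simpa using dotProduct_star_self_pos_iff.mpr hy0
    have hle := (hUc y hy.1).trans (hmono y hy.2)
    rw [hTy, zero_dotProduct] at hle
    nlinarith
  refine hM'.isHermitian.le_eigsAsc_of_le_finrank q ((U ⊓ LinearMap.ker φ).map T) ?_ ?_
  · rw [Submodule.finrank_map_of_injOn T _ hinj]
    omega
  · rintro _ ⟨y, hy, rfl⟩
    exact htransfer _ hc y hy.2 (hUc y hy.1)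

end Matrix

-- The contribution of the edge `f` to `x ⬝ᵥ lapMat E *ᵥ x`. For `#f = 1` the junk value of `/ 0`
-- makes it `x v ^ 2`, which is correct: a singleton edge only adds to the degree.
noncomputable def edgeEnergy (f : Finset (Fin n)) (x : Fin n → ℝ) : ℝ :=
  ∑ v ∈ f, x v ^ 2 - ((∑ v ∈ f, x v) ^ 2 - ∑ v ∈ f, x v ^ 2) / ((#f : ℝ) - 1)

theorem adjMat_apply_eq_sum (E : Finset (Finset (Fin n))) (u v : Fin n) :
    adjMat E u v = ∑ f ∈ E, if u ∈ f ∧ v ∈ f ∧ u ≠ v then 1 / ((#f : ℝ) - 1) else 0 := by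
  by_cases huv : u = v
  · simp [adjMat, huv]
  · simp [adjMat, huv, Finset.sum_filter]

theorem sum_sum_ite_ne_mul (f : Finset (Fin n)) (x : Fin n → ℝ) :
    ∑ u ∈ f, ∑ v ∈ f, (if u ≠ v then x u * x v else 0) = (∑ v ∈ f, x v) ^ 2 - ∑ v ∈ f, x v ^ 2 := by
  rw [sq, Finset.sum_mul_sum, ← Finset.sum_sub_distrib]
  refine Finset.sum_congr rfl fun u hu => ?_
  calc ∑ v ∈ f, (if u ≠ v then x u * x v else 0)
      = ∑ v ∈ f, (x u * x v - if u = v then x u * x v else 0) :=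
        Finset.sum_congr rfl fun v _ => by split_ifs <;> simp_all
    _ = _ := by rw [Finset.sum_sub_distrib, Finset.sum_ite_eq, if_pos hu, sq]

theorem dotProduct_adjMat_mulVec (E : Finset (Finset (Fin n))) (x : Fin n → ℝ) :
    x ⬝ᵥ adjMat E *ᵥ x =
      ∑ f ∈ E, ((∑ v ∈ f, x v) ^ 2 - ∑ v ∈ f, x v ^ 2) / ((#f : ℝ) - 1) := by
  simp only [dotProduct, mulVec, adjMat_apply_eq_sum, Finset.sum_mul, Finset.mul_sum]
  rw [Finset.sum_congr rfl fun u _ => Finset.sum_comm, Finset.sum_comm]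
  refine Finset.sum_congr rfl fun f _ => ?_
  have hsummand : ∀ u v, x u * ((if u ∈ f ∧ v ∈ f ∧ u ≠ v then 1 / ((#f : ℝ) - 1) else 0) * x v)
      = if u ∈ f then (if v ∈ f then
          1 / ((#f : ℝ) - 1) * (if u ≠ v then x u * x v else 0) else 0) else 0 := by
    intro u v
    split_ifs <;> simp_all
    ring
  simp only [hsummand, Finset.sum_ite_irrel, Finset.sum_const_zero, Finset.sum_ite_mem,
    Finset.univ_inter, ← Finset.mul_sum, sum_sum_ite_ne_mul]
  ring

theorem dotProduct_diagonal_mulVec (d x : Fin n → ℝ) :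
    x ⬝ᵥ diagonal d *ᵥ x = ∑ v, d v * x v ^ 2 := by
  simp only [dotProduct, mulVec_diagonal]
  exact Finset.sum_congr rfl fun v _ => by ring

theorem sum_hdeg_mul (E : Finset (Finset (Fin n))) (g : Fin n → ℝ) :
    ∑ v, (hdeg E v : ℝ) * g v = ∑ f ∈ E, ∑ v ∈ f, g v := by
  simp only [hdeg, Finset.card_filter, Nat.cast_sum, Nat.cast_ite, Nat.cast_one, Nat.cast_zero,
    Finset.sum_mul, ite_mul, one_mul, zero_mul]
  rw [Finset.sum_comm]
  simp only [Finset.sum_ite_mem, Finset.univ_inter]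

theorem dotProduct_lapMat_mulVec (E : Finset (Finset (Fin n))) (x : Fin n → ℝ) :
    x ⬝ᵥ lapMat E *ᵥ x = ∑ f ∈ E, edgeEnergy f x := by
  rw [lapMat, sub_mulVec, dotProduct_sub, dotProduct_diagonal_mulVec, sum_hdeg_mul,
    dotProduct_adjMat_mulVec, ← Finset.sum_sub_distrib]
  rfl

theorem dotProduct_lapMat_mulVec_erase {E : Finset (Finset (Fin n))} {e : Finset (Fin n)}
    (he : e ∈ E) (x : Fin n → ℝ) :
    x ⬝ᵥ lapMat E *ᵥ x = x ⬝ᵥ lapMat (E.erase e) *ᵥ x + edgeEnergy e x := by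
  rw [dotProduct_lapMat_mulVec, dotProduct_lapMat_mulVec, Finset.sum_erase_add _ _ he]

theorem dotProduct_lapMat_mulVec_congr (E : Finset (Finset (Fin n))) {x x' : Fin n → ℝ}
    (h : ∀ f ∈ E, ∀ v ∈ f, x v = x' v) :
    x ⬝ᵥ lapMat E *ᵥ x = x' ⬝ᵥ lapMat E *ᵥ x' := by
  simp only [dotProduct_lapMat_mulVec, edgeEnergy]
  refine Finset.sum_congr rfl fun f hf => ?_
  have hsum : ∑ v ∈ f, x v = ∑ v ∈ f, x' v := Finset.sum_congr rfl (h f hf)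
  have hsq : ∑ v ∈ f, x v ^ 2 = ∑ v ∈ f, x' v ^ 2 :=
    Finset.sum_congr rfl fun v hv => by rw [h f hf v hv]
  rw [hsum, hsq]

theorem edgeEnergy_nonneg (f : Finset (Fin n)) (x : Fin n → ℝ) : 0 ≤ edgeEnergy f x := by
  rcases f.eq_empty_or_nonempty with rfl | hne
  · simp [edgeEnergy]
  have hcard : (1 : ℝ) ≤ #f := by exact_mod_cast hne.card_pos
  have hsq : 0 ≤ ∑ v ∈ f, x v ^ 2 := Finset.sum_nonneg fun v _ => sq_nonneg _
  have hcs := sq_sum_le_card_mul_sum_sq (s := f) (f := x)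
  rw [edgeEnergy, sub_nonneg]
  exact div_le_of_le_mul₀ (by linarith) hsq (by linarith)

theorem edgeEnergy_le {f : Finset (Fin n)} (hf : 1 < #f) (x : Fin n → ℝ) :
    edgeEnergy f x ≤ #f / ((#f : ℝ) - 1) * ∑ v ∈ f, x v ^ 2 := by
  have hcard : (0 : ℝ) < #f - 1 := by
    have : (1 : ℝ) < #f := by exact_mod_cast hf
    linarith
  have hgap : #f / ((#f : ℝ) - 1) * ∑ v ∈ f, x v ^ 2 - edgeEnergy f x
      = (∑ v ∈ f, x v) ^ 2 / (#f - 1) := by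
    rw [edgeEnergy]
    field_simp
    ring
  have : 0 ≤ (∑ v ∈ f, x v) ^ 2 / (#f - 1) := by positivity
  linarith

theorem edgeEnergy_eq_zero_of_forall_eq {f : Finset (Fin n)} (hf : 1 < #f) {x : Fin n → ℝ}
    {a : ℝ} (hx : ∀ v ∈ f, x v = a) : edgeEnergy f x = 0 := by
  have hcard : (#f : ℝ) - 1 ≠ 0 := by
    have : (1 : ℝ) < #f := by exact_mod_cast hf
    linarith
  rw [edgeEnergy, Finset.sum_congr rfl hx, Finset.sum_congr rfl fun v hv => by rw [hx v hv]]
  simp only [Finset.sum_const, nsmul_eq_mul]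
  field_simp
  ring

theorem edgeEnergy_of_sum_eq_zero {f : Finset (Fin n)} (hf : 1 < #f) {x : Fin n → ℝ}
    (hx : ∑ v ∈ f, x v = 0) : edgeEnergy f x = #f / ((#f : ℝ) - 1) * ∑ v ∈ f, x v ^ 2 := by
  have hcard : (#f : ℝ) - 1 ≠ 0 := by
    have : (1 : ℝ) < #f := by exact_mod_cast hf
    linarith
  rw [edgeEnergy, hx]
  field_simp
  ring

noncomputable def sqrtDeg (E : Finset (Finset (Fin n))) : Fin n → ℝ := fun v => √(hdeg E v)

theorem normLap_eq (E : Finset (Finset (Fin n))) :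
    normLap E = diagonal (sqrtDeg E)⁻¹ * lapMat E * diagonal (sqrtDeg E)⁻¹ := by
  have h : (fun v => (hdeg E v : ℝ) ^ (-(1 / 2) : ℝ)) = (sqrtDeg E)⁻¹ := by
    funext v
    rw [Pi.inv_apply, sqrtDeg, Real.sqrt_eq_rpow, ← Real.rpow_neg (Nat.cast_nonneg _)]
  rw [normLap, h]

theorem dotProduct_diagonal_mul_mul_diagonal_mulVec (d y : Fin n → ℝ)
    (A : Matrix (Fin n) (Fin n) ℝ) :
    y ⬝ᵥ (diagonal d * A * diagonal d) *ᵥ y = (d * y) ⬝ᵥ A *ᵥ (d * y) := by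
  have hd : ∀ z, diagonal d *ᵥ z = d * z := fun z => funext (mulVec_diagonal d z)
  rw [← mulVec_mulVec, ← mulVec_mulVec, hd, hd]
  simp only [dotProduct, Pi.mul_apply]
  exact Finset.sum_congr rfl fun v _ => by ring

theorem dotProduct_normLap_mulVec (E : Finset (Finset (Fin n))) (y : Fin n → ℝ) :
    y ⬝ᵥ normLap E *ᵥ y = ((sqrtDeg E)⁻¹ * y) ⬝ᵥ lapMat E *ᵥ ((sqrtDeg E)⁻¹ * y) := by
  rw [normLap_eq, dotProduct_diagonal_mul_mul_diagonal_mulVec]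

theorem sqrtDeg_ne_zero {E : Finset (Finset (Fin n))} {f : Finset (Fin n)} (hf : f ∈ E)
    {v : Fin n} (hv : v ∈ f) : sqrtDeg E v ≠ 0 := by
  have : 0 < hdeg E v := Finset.card_pos.mpr ⟨f, Finset.mem_filter.mpr ⟨hf, hv⟩⟩
  exact Real.sqrt_ne_zero'.mpr (by exact_mod_cast this)

theorem dotProduct_normLap_mulVec_sqrtDeg_mul (E : Finset (Finset (Fin n))) (x : Fin n → ℝ) :
    (sqrtDeg E * x) ⬝ᵥ normLap E *ᵥ (sqrtDeg E * x) = x ⬝ᵥ lapMat E *ᵥ x := by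
  rw [dotProduct_normLap_mulVec]
  refine dotProduct_lapMat_mulVec_congr E fun f hf v hv => ?_
  simp [sqrtDeg_ne_zero hf hv]

theorem sqrtDeg_mul_dotProduct_self (E : Finset (Finset (Fin n))) (x : Fin n → ℝ) :
    (sqrtDeg E * x) ⬝ᵥ (sqrtDeg E * x) = ∑ f ∈ E, ∑ v ∈ f, x v ^ 2 := by
  rw [← sum_hdeg_mul]
  refine Finset.sum_congr rfl fun v _ => ?_
  rw [Pi.mul_apply, sqrtDeg, mul_mul_mul_comm, Real.mul_self_sqrt (Nat.cast_nonneg _), sq]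

theorem sum_sum_sq_inv_sqrtDeg_mul_le (E : Finset (Finset (Fin n))) (y : Fin n → ℝ) :
    ∑ f ∈ E, ∑ v ∈ f, ((sqrtDeg E)⁻¹ * y) v ^ 2 ≤ y ⬝ᵥ y := by
  rw [← sum_hdeg_mul]
  refine Finset.sum_le_sum fun v _ => ?_
  rw [Pi.mul_apply, Pi.inv_apply, sqrtDeg, mul_pow, inv_pow, Real.sq_sqrt (Nat.cast_nonneg _)]
  rcases eq_or_ne (hdeg E v : ℝ) 0 with h | h
  · simp [h, mul_self_nonneg]
  · rw [← mul_assoc, mul_inv_cancel₀ h, one_mul, sq]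

theorem posSemidef_normLap (E : Finset (Finset (Fin n))) : (normLap E).PosSemidef := by
  refine posSemidef_iff_dotProduct_mulVec.mpr ⟨isHermitian_normLap E, fun y => ?_⟩
  rw [star_trivial, dotProduct_normLap_mulVec, dotProduct_lapMat_mulVec]
  exact Finset.sum_nonneg fun f _ => edgeEnergy_nonneg f _

theorem dotProduct_normLap_mulVec_le {E : Finset (Finset (Fin n))} {k : ℕ} (hk : 1 < k)
    (hunif : ∀ f ∈ E, #f = k) (y : Fin n → ℝ) :
    y ⬝ᵥ normLap E *ᵥ y ≤ k / ((k : ℝ) - 1) * (y ⬝ᵥ y) := by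
  have hρ : 0 ≤ k / ((k : ℝ) - 1) := by
    have : (1 : ℝ) < k := by exact_mod_cast hk
    exact div_nonneg (by linarith) (by linarith)
  rw [dotProduct_normLap_mulVec, dotProduct_lapMat_mulVec]
  calc ∑ f ∈ E, edgeEnergy f ((sqrtDeg E)⁻¹ * y)
      ≤ ∑ f ∈ E, k / ((k : ℝ) - 1) * ∑ v ∈ f, ((sqrtDeg E)⁻¹ * y) v ^ 2 :=
        Finset.sum_le_sum fun f hf => hunif f hf ▸ edgeEnergy_le (hunif f hf ▸ hk) _
    _ ≤ k / ((k : ℝ) - 1) * (y ⬝ᵥ y) := by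
        rw [← Finset.mul_sum]
        exact mul_le_mul_of_nonneg_left (sum_sum_sq_inv_sqrtDeg_mul_le E y) hρ

theorem eigsAsc_normLap_le {E : Finset (Finset (Fin n))} {k : ℕ} (hk : 1 < k)
    (hunif : ∀ f ∈ E, #f = k) (p : Fin n) : eigsAsc (normLap E) p ≤ k / ((k : ℝ) - 1) :=
  (isHermitian_normLap E).eigsAsc_le (dotProduct_normLap_mulVec_le hk hunif) p

noncomputable def diffFrom (v₀ : Fin n) (s : Finset (Fin n)) : (Fin n → ℝ) →ₗ[ℝ] s → ℝ :=
  LinearMap.pi fun v => LinearMap.proj (R := ℝ) (φ := fun _ => ℝ) (v : Fin n) - LinearMap.proj v₀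

theorem mem_ker_diffFrom {v₀ : Fin n} {s : Finset (Fin n)} {x : Fin n → ℝ} :
    x ∈ LinearMap.ker (diffFrom v₀ s) ↔ ∀ v ∈ s, x v = x v₀ := by
  simp [diffFrom, funext_iff, sub_eq_zero]

theorem eigsAsc_normLap_le_eigsAsc_normLap_erase {E : Finset (Finset (Fin n))}
    {e : Finset (Fin n)} (he : e ∈ E) (he₂ : 1 < #e) {p q : Fin n} (hpq : p + (#e - 1) ≤ q) :
    eigsAsc (normLap E) p ≤ eigsAsc (normLap (E.erase e)) q := by
  obtain ⟨v₀, hv₀⟩ : e.Nonempty := Finset.card_pos.mp (by omega)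
  set T := LinearMap.mulLeft ℝ (sqrtDeg (E.erase e) * (sqrtDeg E)⁻¹)
  set φ := diffFrom v₀ (e.erase v₀) ∘ₗ LinearMap.mulLeft ℝ (sqrtDeg E)⁻¹
  have key : ∀ y ∈ LinearMap.ker φ, y ⬝ᵥ normLap E *ᵥ y = T y ⬝ᵥ normLap (E.erase e) *ᵥ T y ∧
      T y ⬝ᵥ T y ≤ y ⬝ᵥ y := by
    intro y hy
    set x := (sqrtDeg E)⁻¹ * y
    have hTy : T y = sqrtDeg (E.erase e) * x := mul_assoc _ _ _
    have hconst : ∀ v ∈ e, x v = x v₀ := fun v hv => by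
      rcases eq_or_ne v v₀ with rfl | hne
      · rfl
      · exact mem_ker_diffFrom.mp hy v (Finset.mem_erase.mpr ⟨hne, hv⟩)
    refine ⟨?_, ?_⟩
    · rw [hTy, dotProduct_normLap_mulVec_sqrtDeg_mul, dotProduct_normLap_mulVec,
        dotProduct_lapMat_mulVec_erase he, edgeEnergy_eq_zero_of_forall_eq he₂ hconst, add_zero]
    · rw [hTy, sqrtDeg_mul_dotProduct_self]
      refine le_trans ?_ (sum_sum_sq_inv_sqrtDeg_mul_le E y)
      rw [← Finset.sum_erase_add _ _ he, le_add_iff_nonneg_right]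
      exact Finset.sum_nonneg fun v _ => sq_nonneg _
  refine eigsAsc_le_eigsAsc_of_transfer (isHermitian_normLap E) (posSemidef_normLap _) φ T
    (fun y hy => (key y hy).1.le) (fun c hc y hy hcy => ?_) ?_
  · calc c * (T y ⬝ᵥ T y) ≤ c * (y ⬝ᵥ y) := mul_le_mul_of_nonneg_left (key y hy).2 hc.le
      _ ≤ _ := hcy.trans (key y hy).1.le
  · rwa [Module.finrank_fintype_fun_eq_card, Fintype.card_coe, Finset.card_erase_of_mem hv₀]

theorem eigsAsc_normLap_erase_le_eigsAsc_normLap {E : Finset (Finset (Fin n))} {k : ℕ}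
    (hk : 1 < k) (hunif : ∀ f ∈ E, #f = k) {e : Finset (Fin n)} (he : e ∈ E) {p q : Fin n}
    (hpq : p < q) : eigsAsc (normLap (E.erase e)) p ≤ eigsAsc (normLap E) q := by
  set T := LinearMap.mulLeft ℝ (sqrtDeg E * (sqrtDeg (E.erase e))⁻¹)
  set φ := (∑ v ∈ e, LinearMap.proj v) ∘ₗ LinearMap.mulLeft ℝ (sqrtDeg (E.erase e))⁻¹
  have hunif' : ∀ f ∈ E.erase e, #f = k := fun f hf => hunif f (Finset.mem_of_mem_erase hf)
  have key : ∀ z ∈ LinearMap.ker φ,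
      T z ⬝ᵥ normLap E *ᵥ T z = z ⬝ᵥ normLap (E.erase e) *ᵥ z +
        k / ((k : ℝ) - 1) * ∑ v ∈ e, ((sqrtDeg (E.erase e))⁻¹ * z) v ^ 2 ∧
      T z ⬝ᵥ T z = ∑ f ∈ E.erase e, ∑ v ∈ f, ((sqrtDeg (E.erase e))⁻¹ * z) v ^ 2 +
        ∑ v ∈ e, ((sqrtDeg (E.erase e))⁻¹ * z) v ^ 2 := by
    intro z hz
    have hTz : T z = sqrtDeg E * ((sqrtDeg (E.erase e))⁻¹ * z) := mul_assoc _ _ _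
    have hsum : ∑ v ∈ e, ((sqrtDeg (E.erase e))⁻¹ * z) v = 0 := by
      simpa [φ] using LinearMap.mem_ker.mp hz
    rw [hTz, dotProduct_normLap_mulVec_sqrtDeg_mul, dotProduct_lapMat_mulVec_erase he,
      edgeEnergy_of_sum_eq_zero (hunif e he ▸ hk) hsum, hunif e he, ← dotProduct_normLap_mulVec,
      sqrtDeg_mul_dotProduct_self, Finset.sum_erase_add _ _ he]
    exact ⟨rfl, rfl⟩
  have hρ : 0 ≤ k / ((k : ℝ) - 1) := by
    have : (1 : ℝ) < k := by exact_mod_cast hk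
    exact div_nonneg (by linarith) (by linarith)
  have hsq : ∀ z : Fin n → ℝ, 0 ≤ ∑ v ∈ e, ((sqrtDeg (E.erase e))⁻¹ * z) v ^ 2 :=
    fun z => Finset.sum_nonneg fun v _ => sq_nonneg _
  refine eigsAsc_le_eigsAsc_of_transfer (isHermitian_normLap _) (posSemidef_normLap E) φ T
    (fun z hz => ?_) (fun c hc z hz hcz => ?_) ?_
  · rw [(key z hz).1]
    exact le_add_of_nonneg_right (mul_nonneg hρ (hsq z))
  · rcases eq_or_ne z 0 with rfl | hz0
    · simp
    have hpos : 0 < z ⬝ᵥ z := by simpa using dotProduct_star_self_pos_iff.mpr hz0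
    have hcρ : c ≤ k / ((k : ℝ) - 1) :=
      le_of_mul_le_mul_right (hcz.trans (dotProduct_normLap_mulVec_le hk hunif' z)) hpos
    rw [(key z hz).1, (key z hz).2, mul_add]
    refine add_le_add ?_ (mul_le_mul_of_nonneg_right hcρ (hsq z))
    exact (mul_le_mul_of_nonneg_left (sum_sum_sq_inv_sqrtDeg_mul_le _ z) hc.le).trans hcz
  · rw [Module.finrank_self]
    exact hpq

theorem lamConv_natCast {k : ℕ} (M : Matrix (Fin n) (Fin n) ℝ) {j : ℕ} (h1 : 1 ≤ j)
    (h2 : j ≤ n) : lamConv k M j = eigsAsc M ⟨n - j, by omega⟩ := by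
  rw [lamConv, dif_neg (by omega), dif_pos (by exact_mod_cast h2)]
  rfl

theorem lamConv_of_lt_one {k : ℕ} (M : Matrix (Fin n) (Fin n) ℝ) {j : ℤ} (h : j < 1) :
    lamConv k M j = k / ((k : ℝ) - 1) := by
  rw [lamConv, dif_pos h]

theorem lamConv_of_lt {k : ℕ} (M : Matrix (Fin n) (Fin n) ℝ) {j : ℤ} (h : n < j) :
    lamConv k M j = 0 := by
  rw [lamConv, dif_neg (by omega), dif_neg (by omega)]

theorem stmt16 (n k : ℕ) (hk : 2 ≤ k) (E : Finset (Finset (Fin n)))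
    (hunif : ∀ f ∈ E, f.card = k) (e : Finset (Fin n)) (he : e ∈ E)
    (i : ℕ) (h1 : 1 ≤ i) (h2 : i ≤ n) :
    lamConv k (normLap E) ((i : ℤ) + (k : ℤ) - 1) ≤ lamConv k (normLap (E.erase e)) (i : ℤ) ∧
    lamConv k (normLap (E.erase e)) (i : ℤ) ≤ lamConv k (normLap E) ((i : ℤ) - (k : ℤ) + 1) := by
  have hk₁ : 1 < k := hk
  have hunif' : ∀ f ∈ E.erase e, #f = k := fun f hf => hunif f (Finset.mem_of_mem_erase hf)
  rw [lamConv_natCast _ h1 h2]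
  constructor
  · rcases le_or_gt (i + k - 1) n with hn | hn
    · rw [show (i : ℤ) + k - 1 = ((i + k - 1 : ℕ) : ℤ) by omega, lamConv_natCast _ (by omega) hn]
      exact eigsAsc_normLap_le_eigsAsc_normLap_erase he (hunif e he ▸ hk₁)
        (by simp only [hunif e he]; omega)
    · rw [lamConv_of_lt _ (by omega)]
      exact (posSemidef_normLap _).eigsAsc_nonneg _
  · rcases le_or_gt k i with hi | hi
    · rw [show (i : ℤ) - k + 1 = ((i + 1 - k : ℕ) : ℤ) by omega,
        lamConv_natCast _ (by omega) (by omega)]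
      exact eigsAsc_normLap_erase_le_eigsAsc_normLap hk₁ hunif he (Fin.mk_lt_mk.mpr (by omega))
    · rw [lamConv_of_lt_one _ (by omega)]
      exact eigsAsc_normLap_le hk₁ hunif' _
end
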